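/- arXiv:2501.16342 — 2 statements merged into one kernel-verified Lean document; each statement's English description precedes it below -/
import Mathlib

section
/- For λ = 1 and q > 0, ∑_{k ∈ ℤ} Φ(x − k) = 1 for every x ∈ ℝ, where Φ(x) = (1/2)(M_{q,1}(x) + M_{1/q,1}(x)). -/
noncomputable def g (q l x : ℝ) : ℝ :=
  (Real.exp (l * x) - q * Real.exp (-(l * x))) / (Real.exp (l * x) + q * Real.exp (-(l * x)))

noncomputable def M (q l x : ℝ) : ℝ := (g q l (x + 1) - g q l (x - 1)) / 4

noncomputable def Phi (q l x : ℝ) : ℝ := (M q l x + M (1 / q) l x) / 2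

lemma g_eq (q : ℝ) (hq : 0 < q) (y : ℝ) :
    g q 1 y = 1 - 2 * q / (Real.exp (2 * y) + q) := by
  have h1 : Real.exp y ≠ 0 := (Real.exp_pos y).ne'
  have h2 : Real.exp y + q * Real.exp (-y) > 0 := by positivity
  have h3 : Real.exp (2 * y) + q > 0 := by positivity
  have he : Real.exp (2 * y) = Real.exp y * Real.exp y := by
    rw [two_mul, Real.exp_add]
  rw [g, one_mul, Real.exp_neg, he]
  field_simp
  ring

lemma g_mono (q : ℝ) (hq : 0 < q) {a b : ℝ} (hab : a ≤ b) : g q 1 a ≤ g q 1 b := by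
  rw [g_eq q hq, g_eq q hq]
  have ha : (0:ℝ) < Real.exp (2 * a) + q := by positivity
  have h : Real.exp (2 * a) + q ≤ Real.exp (2 * b) + q := by
    have := Real.exp_le_exp.mpr (by linarith : 2 * a ≤ 2 * b)
    linarith
  have := div_le_div_of_nonneg_left (by positivity : (0:ℝ) ≤ 2 * q) ha h
  linarith

lemma g_tendsto_top (q : ℝ) (hq : 0 < q) :
    Filter.Tendsto (g q 1) Filter.atTop (nhds 1) := by
  have h : Filter.Tendsto (fun y => 1 - 2 * q / (Real.exp (2 * y) + q))
      Filter.atTop (nhds 1) := by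
    have hd : Filter.Tendsto (fun y : ℝ => Real.exp (2 * y) + q) Filter.atTop Filter.atTop :=
      (Real.tendsto_exp_atTop.comp (Filter.tendsto_id.const_mul_atTop two_pos)).atTop_add
        tendsto_const_nhds
    have := Filter.Tendsto.div_atTop (tendsto_const_nhds (x := 2 * q)) hd
    have h2 := (tendsto_const_nhds (x := (1:ℝ))).sub this
    simpa using h2
  exact h.congr fun y => (g_eq q hq y).symm

lemma g_tendsto_bot (q : ℝ) (hq : 0 < q) :
    Filter.Tendsto (g q 1) Filter.atBot (nhds (-1)) := by
  have hd : Filter.Tendsto (fun y : ℝ => Real.exp (2 * y) + q) Filter.atBot (nhds q) := by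
    have : Filter.Tendsto (fun y : ℝ => Real.exp (2 * y)) Filter.atBot (nhds 0) :=
      Real.tendsto_exp_atBot.comp (Filter.tendsto_id.const_mul_atBot two_pos)
    simpa using this.add tendsto_const_nhds
  have h : Filter.Tendsto (fun y => 1 - 2 * q / (Real.exp (2 * y) + q))
      Filter.atBot (nhds (-1)) := by
    have h5 : Filter.Tendsto (fun y : ℝ => 2 * q / (Real.exp (2 * y) + q))
        Filter.atBot (nhds 2) := by
      have := Filter.Tendsto.div (tendsto_const_nhds (x := 2 * q)) hd hq.ne'
      simpa [Pi.div_def, mul_div_assoc, div_self hq.ne'] using this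
    have h6 := (tendsto_const_nhds (x := (1:ℝ))).sub h5
    norm_num at h6
    exact h6
  exact h.congr fun y => (g_eq q hq y).symm

theorem Phi_partition_of_unity (q : ℝ) (hq : 0 < q) (x : ℝ) :
    HasSum (fun k : ℤ => Phi q 1 (x - k)) 1 := by
  have hq' : (0:ℝ) < 1 / q := by positivity
  set F : ℤ → ℝ := fun k =>
    (g q 1 (x - k) + g (1/q) 1 (x - k) + g q 1 (x - k + 1) + g (1/q) 1 (x - k + 1)) / 8 with hF
  have key : ∀ k : ℤ, Phi q 1 (x - k) = F k - F (k + 1) := by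
    intro k
    simp only [hF, Phi, M]
    push_cast
    ring_nf
  have hnonneg : ∀ k : ℤ, 0 ≤ Phi q 1 (x - k) := by
    intro k
    have h1 := g_mono q hq (by linarith : x - (k:ℝ) - 1 ≤ x - k + 1)
    have h2 := g_mono (1/q) hq' (by linarith : x - (k:ℝ) - 1 ≤ x - k + 1)
    simp only [Phi, M]
    linarith
  -- limits of F
  have hsub : Filter.Tendsto (fun n : ℕ => x - (n : ℝ)) Filter.atTop Filter.atBot := by
    have h1 : Filter.Tendsto (fun n : ℕ => (n : ℝ) - x) Filter.atTop Filter.atTop :=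
      (Filter.tendsto_atTop_add_const_right _ (-x) tendsto_natCast_atTop_atTop).congr
        (fun n => by ring)
    exact (Filter.tendsto_neg_atTop_atBot.comp h1).congr fun n => by simp
  have hadd : Filter.Tendsto (fun n : ℕ => x + (n : ℝ)) Filter.atTop Filter.atTop :=
    Filter.tendsto_atTop_add_const_left _ x tendsto_natCast_atTop_atTop
  have hFtop : Filter.Tendsto (fun n : ℕ => F (n : ℤ)) Filter.atTop (nhds (-(1/2))) := by
    have hsub1 : Filter.Tendsto (fun n : ℕ => x - (n : ℝ) + 1) Filter.atTop Filter.atBot :=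
      Filter.tendsto_atBot_add_const_right _ 1 hsub
    have h1 := (g_tendsto_bot q hq).comp hsub
    have h2 := (g_tendsto_bot (1/q) hq').comp hsub
    have h3 := (g_tendsto_bot q hq).comp hsub1
    have h4 := (g_tendsto_bot (1/q) hq').comp hsub1
    have h := (((h1.add h2).add h3).add h4).div_const (8:ℝ)
    have hval : ((-1:ℝ) + -1 + -1 + -1) / 8 = -(1/2) := by norm_num
    rw [hval] at h
    exact h.congr fun n => by simp only [hF, Function.comp]; push_cast; ring_nf
  have hFbot : Filter.Tendsto (fun n : ℕ => F (-(n : ℤ))) Filter.atTop (nhds (1/2)) := by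
    have hadd1 : Filter.Tendsto (fun n : ℕ => x + (n : ℝ) + 1) Filter.atTop Filter.atTop :=
      Filter.tendsto_atTop_add_const_right _ 1 hadd
    have h1 := (g_tendsto_top q hq).comp hadd
    have h2 := (g_tendsto_top (1/q) hq').comp hadd
    have h3 := (g_tendsto_top q hq).comp hadd1
    have h4 := (g_tendsto_top (1/q) hq').comp hadd1
    have h := (((h1.add h2).add h3).add h4).div_const (8:ℝ)
    have hval : ((1:ℝ) + 1 + 1 + 1) / 8 = 1/2 := by norm_num
    rw [hval] at h
    exact h.congr fun n => by simp only [hF, Function.comp]; push_cast; ring_nf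
  -- sums over nonnegative and negative integers
  have hpos : HasSum (fun n : ℕ => Phi q 1 (x - ((n : ℤ) : ℝ))) (F 0 + 1/2) := by
    rw [hasSum_iff_tendsto_nat_of_nonneg (fun n => hnonneg n)]
    have hps : ∀ n : ℕ, ∑ i ∈ Finset.range n, Phi q 1 (x - ((i : ℤ) : ℝ)) = F 0 - F n := by
      intro n
      calc ∑ i ∈ Finset.range n, Phi q 1 (x - ((i : ℤ) : ℝ))
          = ∑ i ∈ Finset.range n, ((fun i : ℕ => F i) i - (fun i : ℕ => F i) (i + 1)) := by
            refine Finset.sum_congr rfl fun i _ => ?_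
            rw [key]
            norm_num
        _ = F ((0:ℕ):ℤ) - F n := Finset.sum_range_sub' _ n
        _ = F 0 - F n := by norm_num
    have h := tendsto_const_nhds (x := F 0) (f := Filter.atTop (α := ℕ)) |>.sub hFtop
    have hval : F 0 - -(1/2) = F 0 + 1/2 := by ring
    rw [hval] at h
    exact h.congr fun n => (hps n).symm
  have hneg : HasSum (fun n : ℕ => Phi q 1 (x - ((-(n+1) : ℤ) : ℝ))) (1/2 - F 0) := by
    rw [hasSum_iff_tendsto_nat_of_nonneg (fun n => hnonneg _)]
    have hps : ∀ n : ℕ, ∑ i ∈ Finset.range n, Phi q 1 (x - ((-(i+1) : ℤ) : ℝ)) =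
        F (-(n:ℤ)) - F 0 := by
      intro n
      rw [show F (-(n:ℤ)) - F 0 = (fun i : ℕ => F (-(i:ℤ))) n - (fun i : ℕ => F (-(i:ℤ))) 0
          by norm_num,
        ← Finset.sum_range_sub (fun i : ℕ => F (-(i:ℤ))) n]
      refine Finset.sum_congr rfl fun i _ => ?_
      rw [key]
      have : (-(i+1) : ℤ) + 1 = -(i:ℤ) := by ring
      rw [this]
      push_cast
      ring
    have h := hFbot.sub (tendsto_const_nhds (x := F 0) (f := Filter.atTop (α := ℕ)))
    exact h.congr fun n => (hps n).symm
  have h : HasSum (fun k : ℤ => Phi q 1 (x - k)) ((F 0 + 1/2) + (1/2 - F 0)) :=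
    HasSum.of_nat_of_neg_add_one hpos hneg
  have hval : (F 0 + 1/2) + (1/2 - F 0) = 1 := by ring
  rwa [hval] at h
end

section
/- Let Z: ℝ^N → ℝ be nonnegative with integer translates summing to 1, and suppose f: ℝ^N → ℝ is uniformly continuous and bounded. If moreover for every δ > 0, ∑_{k : ‖y − k‖ > δ n} Z(y − k) → 0 uniformly in y as n → ∞, then A_n(f, x) → f(x) uniformly in x as n → ∞, where A_n(f, x) = ∑_{k ∈ ℤ^N} f(k/n) Z(nx − k). -/
/-!
Since the weights `Z (n x - k)` are nonnegative and sum to one, `A_n(f, x) - f x` is the weighted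
average of `f (k / n) - f x`. Split the lattice points `k` according to whether
`‖n x - k‖ ≤ δ n`: for those, `k / n` lies within `δ` of `x`, so uniform continuity makes
`|f (k / n) - f x|` small; the others carry total weight tending to zero uniformly in `x`, while
`|f (k / n) - f x| ≤ 2B` there.
-/

section WeightedAverage

variable {ι : Type*} {w g : ι → ℝ} {c M η : ℝ}

theorem summable_ite_of_nonneg (hw : ∀ k, 0 ≤ w k) (hws : Summable w) (p : ι → Prop)
    [DecidablePred p] : Summable fun k => if p k then w k else 0 :=
  hws.of_nonneg_of_le (fun k => by split_ifs <;> simp [hw k])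
    (fun k => by split_ifs <;> simp [hw k])

theorem tsum_mul_sub_eq_of_hasSum_one (hw1 : HasSum w 1) (hg : ∀ k, |g k - c| ≤ M) :
    ∑' k, g k * w k - c = ∑' k, (g k - c) * w k := by
  have hdev : Summable fun k => (g k - c) * w k := by
    refine Summable.of_norm_bounded (hw1.summable.abs.mul_left M) fun k => ?_
    rw [Real.norm_eq_abs, abs_mul]
    exact mul_le_mul_of_nonneg_right (hg k) (abs_nonneg _)
  have hsplit : HasSum (fun k => g k * w k) (∑' k, (g k - c) * w k + c) := by
    simpa [sub_mul] using hdev.hasSum.add (hw1.mul_left c)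
  rw [hsplit.tsum_eq, add_sub_cancel_right]

theorem abs_tsum_mul_sub_le (hw : ∀ k, 0 ≤ w k) (hw1 : HasSum w 1) (hg : ∀ k, |g k - c| ≤ M)
    (p : ι → Prop) [DecidablePred p] (hη : 0 ≤ η) (hnear : ∀ k, ¬ p k → |g k - c| ≤ η) :
    |∑' k, g k * w k - c| ≤ M * (∑' k, if p k then w k else 0) + η := by
  rw [tsum_mul_sub_eq_of_hasSum_one hw1 hg]
  have hbound : HasSum (fun k => M * (if p k then w k else 0) + η * w k)
      (M * (∑' k, if p k then w k else 0) + η) := by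
    simpa using ((summable_ite_of_nonneg hw hw1.summable p).hasSum.mul_left M).add
      (hw1.mul_left η)
  refine tsum_of_norm_bounded (f := fun k => (g k - c) * w k) hbound fun k => ?_
  rw [Real.norm_eq_abs, abs_mul, abs_of_nonneg (hw k)]
  by_cases hk : p k
  · simpa [hk] using add_le_add (mul_le_mul_of_nonneg_right (hg k) (hw k))
      (mul_nonneg hη (hw k))
  · simpa [hk] using mul_le_mul_of_nonneg_right (hnear k hk) (hw k)

end WeightedAverage

theorem norm_smul_sub_eq_mul_dist {E : Type*} [NormedAddCommGroup E] [NormedSpace ℝ E]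
    {t : ℝ} (ht : 0 < t) (x v : E) : ‖t • x - v‖ = t * dist (t⁻¹ • v) x := by
  rw [dist_comm, dist_eq_norm, ← smul_inv_smul₀ ht.ne' v, ← smul_sub, norm_smul,
    Real.norm_of_nonneg ht.le, inv_smul_smul₀ ht.ne']

theorem An_uniform_convergence (N : ℕ) (Z : (Fin N → ℝ) → ℝ)
    (hZ : ∀ y : Fin N → ℝ, 0 ≤ Z y)
    (hsum : ∀ y : Fin N → ℝ,
      HasSum (fun k : Fin N → ℤ => Z (y - fun i => (k i : ℝ))) 1)
    (f : (Fin N → ℝ) → ℝ) (hfc : UniformContinuous f)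
    (B : ℝ) (hfb : ∀ y, |f y| ≤ B)
    (htail : ∀ δ > (0 : ℝ), ∀ ε > (0 : ℝ), ∃ n₀ : ℕ, ∀ n ≥ n₀, ∀ y : Fin N → ℝ,
      (∑' k : Fin N → ℤ,
        if δ * n < ‖y - fun i => (k i : ℝ)‖ then Z (y - fun i => (k i : ℝ)) else 0) ≤ ε) :
    ∀ ε > (0 : ℝ), ∃ n₀ : ℕ, ∀ n ≥ n₀, 0 < n → ∀ x : Fin N → ℝ,
      |(∑' k : Fin N → ℤ,
          f (fun i => (k i : ℝ) / n) * Z ((n : ℝ) • x - fun i => (k i : ℝ))) - f x| ≤ ε := by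
  intro ε hε
  have hB : 0 ≤ B := (abs_nonneg _).trans (hfb 0)
  have hosc : ∀ a b, |f a - f b| ≤ 2 * B := fun a b => by
    linarith [abs_sub (f a) (f b), hfb a, hfb b]
  obtain ⟨δ, hδ, hfδ⟩ := Metric.uniformContinuous_iff_le.mp hfc (ε / 2) (by positivity)
  obtain ⟨n₀, hn₀⟩ := htail δ hδ (ε / (4 * B + 2)) (by positivity)
  refine ⟨n₀, fun n hn hnpos x => ?_⟩
  have hn_pos : (0 : ℝ) < n := Nat.cast_pos.mpr hnpos
  refine (abs_tsum_mul_sub_le (fun k => hZ _) (hsum _) (η := ε / 2) (fun k => hosc _ x)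
    (fun k : Fin N → ℤ => δ * n < ‖(n : ℝ) • x - fun i => (k i : ℝ)‖) (by positivity)
    fun k hk => ?_).trans ?_
  · have hk_dist : dist ((n : ℝ)⁻¹ • fun i => (k i : ℝ)) x ≤ δ := by
      rw [norm_smul_sub_eq_mul_dist hn_pos, not_lt, mul_comm δ] at hk
      exact le_of_mul_le_mul_left hk hn_pos
    have hk_point : (fun i => (k i : ℝ) / n) = (n : ℝ)⁻¹ • fun i => (k i : ℝ) := by
      ext i
      simp [div_eq_inv_mul]
    rw [hk_point]
    exact hfδ hk_dist
  · have htail_n :=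
      mul_le_mul_of_nonneg_left (hn₀ n hn ((n : ℝ) • x)) (by positivity : 0 ≤ 2 * B)
    have hsmall : 2 * B * (ε / (4 * B + 2)) ≤ ε / 2 := by
      rw [mul_div_assoc', div_le_div_iff₀ (by positivity) two_pos]
      nlinarith
    linarith
end
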